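/- If the tag system T produces ζ from ξ in one step (ξ ↦_T ζ), then for all A ∈ ͞ξ and B ∈ ͞ζ one has P_T ⊢ A ⇒ B: there exist formulas C₀ = A, C₁, …, C_n = B (n ≥ 0) with P_T ⊢ C_i → C_{i+1} for all 0 ≤ i ≤ n−1. -/

import Mathlib

namespace PC

/-- `{→}`-formulas over a countably infinite set of propositional variables. -/
inductive Fml : Type where
  | var : ℕ → Fml
  | imp : Fml → Fml → Fml
deriving DecidableEq

namespace Fml

/-- Application of a substitution to a formula. -/
def subst (σ : ℕ → Fml) : Fml → Fml
  | var n => σ n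
  | imp A B => imp (subst σ A) (subst σ B)

/-- The set of variables of a formula. -/
def fvars : Fml → Finset ℕ
  | var n => {n}
  | imp A B => fvars A ∪ fvars B

/-- Derivability from a set of axioms by modus ponens and substitution. -/
inductive Deriv (P : Set Fml) : Fml → Prop
  | ax {A : Fml} : A ∈ P → Deriv P A
  | mp {A B : Fml} : Deriv P A → Deriv P (imp A B) → Deriv P B
  | sub {A : Fml} (σ : ℕ → Fml) : Deriv P A → Deriv P (subst σ A)

end Fml

/-- `B̂`: the result of substituting `B` for the variable `x` (= `var 0`) in `x̂`. -/
def hat (xhat B : Fml) : Fml := Fml.subst (fun n => if n = 0 then B else Fml.var n) xhat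

/-- `A ∘ B := ((B̂ → B̂) → B̂) → (Â → ((B̂ → B̂) → B̂))`. -/
def circ (xhat A B : Fml) : Fml :=
  .imp (.imp (.imp (hat xhat B) (hat xhat B)) (hat xhat B))
    (.imp (hat xhat A) (.imp (.imp (hat xhat B) (hat xhat B)) (hat xhat B)))

/-- `A · B := ((A → A) → A) ∘ B`. -/
def dot (xhat A B : Fml) : Fml := circ xhat (.imp (.imp A A) A) B

/-- `Cform i` is the formula `p → (p → … (p → p))` with `i` antecedents `p`,
where `p := var 0`. -/
def Cform : ℕ → Fml
  | 0 => .var 0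
  | n + 1 => .imp (.var 0) (Cform n)

/-- The code of the letter `aᵢ` (letters of the alphabet `𝒜 = {a₁, …, a_m}` are the
elements of `Fin m`, the letter `a : Fin m` standing for `a_{a+1}`): `Cᵢ ∘ p`. -/
def letterCode (xhat : Fml) {m : ℕ} (a : Fin m) : Fml :=
  circ xhat (Cform (a.val + 1)) (.var 0)

/-- Formal alphabetic-formula trees over the alphabet `Fin m`. -/
inductive ATree (m : ℕ) : Type where
  | leaf : Fin m → ATree m
  | node : ATree m → ATree m → ATree m

/-- The word associated with an alphabetic formula. -/
def ATree.word {m : ℕ} : ATree m → List (Fin m)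
  | .leaf a => [a]
  | .node l r => l.word ++ r.word

/-- The `{→}`-formula denoted by an alphabetic-formula tree. -/
def ATree.toFml {m : ℕ} (xhat : Fml) : ATree m → Fml
  | .leaf a => letterCode xhat a
  | .node l r => dot xhat (l.toFml xhat) (r.toFml xhat)

/-- `A` is an alphabetic formula (an `𝒜`-formula). -/
def IsAForm (m : ℕ) (xhat : Fml) (A : Fml) : Prop := ∃ t : ATree m, t.toFml xhat = A

/-- The code `͞α` of a word `α`: the set of all `𝒜`-formulas `A` with `word(A) = α`. -/
def codeSet {m : ℕ} (xhat : Fml) (α : List (Fin m)) : Set Fml :=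
  { A | ∃ t : ATree m, t.word = α ∧ t.toFml xhat = A }

/-- `A*`: the set of substitution instances of `A`. -/
def Inst (A : Fml) : Set Fml := { B | ∃ σ, Fml.subst σ A = B }

/-- `M*`: the set of substitution instances of members of `M`. -/
def InstSet (M : Set Fml) : Set Fml := { B | ∃ A ∈ M, ∃ σ, Fml.subst σ A = B }

/-- A tag system over the alphabet `Fin m`: the words `ω₁, …, ω_m` and the
deletion number `d`. -/
structure TagSystem (m : ℕ) where
  W : Fin m → List (Fin m)
  d : ℕ

/-- One-step production: `ξ ↦_T ζ` iff `ξ = aᵢβγ` with `|β| = d − 1` and `ζ = γωᵢ`. -/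
def TagStep {m : ℕ} (T : TagSystem m) (ξ ζ : List (Fin m)) : Prop :=
  ∃ (i : Fin m) (β γ : List (Fin m)),
    β.length = T.d - 1 ∧ ξ = i :: (β ++ γ) ∧ ζ = γ ++ T.W i

/-- `ξ ⟾_T ζ`: reflexive-transitive closure of one-step production. -/
def TagProd {m : ℕ} (T : TagSystem m) : List (Fin m) → List (Fin m) → Prop :=
  Relation.ReflTransGen (TagStep T)

/-- `T` halts on `ξ`. -/
def TagHalts {m : ℕ} (T : TagSystem m) (ξ : List (Fin m)) : Prop :=
  ∃ ζ, TagProd T ξ ζ ∧ ζ.length < T.d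

/-- The variables `x, y, z, u` used in the axiom schemes. -/
def Xv : Fml := .var 1
def Yv : Fml := .var 2
def Zv : Fml := .var 3
def Uv : Fml := .var 4

/-- The axioms (R₁)–(R₄). -/
def Raxioms (xhat : Fml) : Set Fml :=
  { .imp (dot xhat Xv (dot xhat Yv Zv)) (dot xhat (dot xhat Xv Yv) Zv),
    .imp (dot xhat (dot xhat Xv Yv) Zv) (dot xhat Xv (dot xhat Yv Zv)),
    .imp (dot xhat (dot xhat Xv (dot xhat Yv Zv)) Uv)
      (dot xhat (dot xhat (dot xhat Xv Yv) Zv) Uv),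
    .imp (dot xhat (dot xhat (dot xhat Xv Yv) Zv) Uv)
      (dot xhat (dot xhat Xv (dot xhat Yv Zv)) Uv) }

/-- The axioms (T₁) and (T₂) of `P_T`. -/
def Taxioms {m : ℕ} (xhat : Fml) (T : TagSystem m) : Set Fml :=
  { F | ∃ (i : Fin m) (α : List (Fin m)) (A B : Fml),
      α.length = T.d - 1 ∧ A ∈ codeSet xhat (i :: α) ∧ B ∈ codeSet xhat (T.W i) ∧
      (F = .imp (dot xhat A Xv) (dot xhat Xv B) ∨ F = .imp A B) }

/-- The calculus `P_T`. -/
def PT {m : ℕ} (xhat : Fml) (T : TagSystem m) : Set Fml := Taxioms xhat T ∪ Raxioms xhat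

/-- `P ⊢ A ⇒ B`: there are `C₀ = A, …, C_n = B` with `P ⊢ Cᵢ → Cᵢ₊₁` for all `i`. -/
def DChain (P : Set Fml) : Fml → Fml → Prop :=
  Relation.ReflTransGen (fun C D => Fml.Deriv P (.imp C D))

/-- `T_α`: the set of `𝒜`-formulas `A` with `α ⟾_T word(A)`. -/
def Tset {m : ℕ} (xhat : Fml) (T : TagSystem m) (α : List (Fin m)) : Set Fml :=
  { A | ∃ t : ATree m, t.toFml xhat = A ∧ TagProd T α t.word }

/-- The halting-condition axioms (H) for the calculus `P₀`. -/
def Haxioms {m : ℕ} (xhat : Fml) (T : TagSystem m) (P₀ : Finset Fml) : Set Fml :=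
  { F | ∃ (α : List (Fin m)) (A B : Fml), α ≠ [] ∧ α.length < T.d ∧
      A ∈ codeSet xhat α ∧ B ∈ P₀ ∧ F = .imp A B }

/-- The calculus `P_{T,P₀}`. -/
def PTP0 {m : ℕ} (xhat : Fml) (T : TagSystem m) (P₀ : Finset Fml) : Set Fml :=
  PT xhat T ∪ Haxioms xhat T P₀

/-- The calculus `P_{T,P₀,ξ}`. -/
def PTP0xi {m : ℕ} (xhat : Fml) (T : TagSystem m) (P₀ : Finset Fml)
    (ξ : List (Fin m)) : Set Fml :=
  PT xhat T ∪ Haxioms xhat T P₀ ∪ codeSet xhat ξ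

/-- `⟨P⟩`: formulas obtained from `P` by one application of modus ponens or
substitution. -/
def stepOnce (P : Set Fml) : Set Fml :=
  { B | ∃ A, A ∈ P ∧ Fml.imp A B ∈ P } ∪ { B | ∃ A ∈ P, ∃ σ, Fml.subst σ A = B }

/-- `⟨P⟩_n`. -/
def stepIter (P : Set Fml) : ℕ → Set Fml
  | 0 => P
  | n + 1 => stepOnce (stepIter P n)

/-- The single axiom `x → (y → x)`. -/
def Kax : Fml := .imp (.var 0) (.imp (.var 1) (.var 0))

/-- An effective encoding of `{→}`-formulas as natural numbers. -/
def encFml : Fml → ℕ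
  | .var n => Nat.pair 0 n
  | .imp A B => Nat.pair 1 (Nat.pair (encFml A) (encFml B))

/-- The fixed effective encoding of `{→}`-calculi (finite sets of formulas)
as natural numbers. -/
def encCalc (P : Finset Fml) : ℕ :=
  Encodable.encode ((P.image encFml).sort (· ≤ ·))

/-!
Every alphabetic formula is a bracketing of its word under `·`, and (R₁)–(R₄) let `P_T` pass
between any two bracketings of the same word, through the left comb. For `ξ = aᵢβγ` and
`ζ = γωᵢ`, rebracket `A` as `H · G` with `word H = aᵢβ` and `word G = γ`; the instance `x := G`
of (T₁) gives `G · W` with `word W = ωᵢ`, which rebrackets to `B`. The substitution leaves `H`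
and `W` alone because an alphabetic formula has no variable but `p`. If `γ` is empty, (T₂)
makes the step directly.
-/

namespace Fml

theorem subst_subst (σ τ : ℕ → Fml) (A : Fml) :
    (A.subst τ).subst σ = A.subst fun n => (τ n).subst σ := by
  induction A with
  | var n => rfl
  | imp A B ihA ihB => rw [subst, subst, subst, ihA, ihB]

theorem subst_congr {σ τ : ℕ → Fml} {A : Fml} (h : ∀ n ∈ A.fvars, σ n = τ n) :
    A.subst σ = A.subst τ := by
  induction A with
  | var n => exact h n (Finset.mem_singleton_self n)
  | imp A B ihA ihB =>
    simp only [fvars, Finset.mem_union] at h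
    rw [subst, subst, ihA fun n hn => h n (.inl hn), ihB fun n hn => h n (.inr hn)]

theorem Deriv.subst_of_mem {P : Set Fml} {F : Fml} (h : F ∈ P) (σ : ℕ → Fml) :
    Deriv P (F.subst σ) :=
  .sub σ (.ax h)

end Fml

section Substitution

variable {xhat : Fml}

theorem subst_hat (hx : xhat.fvars ⊆ {0}) (σ : ℕ → Fml) (B : Fml) :
    (hat xhat B).subst σ = hat xhat (B.subst σ) := by
  rw [hat, hat, Fml.subst_subst]
  refine Fml.subst_congr fun n hn => ?_
  obtain rfl := Finset.mem_singleton.mp (hx hn)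
  rfl

theorem subst_circ (hx : xhat.fvars ⊆ {0}) (σ : ℕ → Fml) (A B : Fml) :
    (circ xhat A B).subst σ = circ xhat (A.subst σ) (B.subst σ) := by
  simp only [circ, Fml.subst, subst_hat hx]

theorem subst_dot (hx : xhat.fvars ⊆ {0}) (σ : ℕ → Fml) (A B : Fml) :
    (dot xhat A B).subst σ = dot xhat (A.subst σ) (B.subst σ) := by
  rw [dot, dot, subst_circ hx]
  rfl

theorem subst_Cform {σ : ℕ → Fml} (hσ : σ 0 = .var 0) (k : ℕ) : (Cform k).subst σ = Cform k := by
  induction k with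
  | zero => exact hσ
  | succ k ih => rw [Cform, Fml.subst, Fml.subst, hσ, ih]

theorem ATree.subst_toFml {m : ℕ} (hx : xhat.fvars ⊆ {0}) {σ : ℕ → Fml} (hσ : σ 0 = .var 0)
    (t : ATree m) : (t.toFml xhat).subst σ = t.toFml xhat := by
  induction t with
  | leaf a => rw [toFml, letterCode, subst_circ hx, subst_Cform hσ, Fml.subst, hσ]
  | node l r ihl ihr => rw [toFml, subst_dot hx, ihl, ihr]

theorem subst_of_mem_codeSet {m : ℕ} (hx : xhat.fvars ⊆ {0}) {σ : ℕ → Fml}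
    (hσ : σ 0 = .var 0) {α : List (Fin m)} {A : Fml} (hA : A ∈ codeSet xhat α) :
    A.subst σ = A := by
  obtain ⟨t, -, rfl⟩ := hA
  exact t.subst_toFml hx hσ

end Substitution

section RInstances

variable {xhat : Fml} {P : Set Fml}

def substXYZU (X Y Z U : Fml) : ℕ → Fml
  | 1 => X
  | 2 => Y
  | 3 => Z
  | 4 => U
  | n => .var n

theorem deriv_R₁ (hx : xhat.fvars ⊆ {0}) (hR : Raxioms xhat ⊆ P) (X Y Z : Fml) :
    Fml.Deriv P (.imp (dot xhat X (dot xhat Y Z)) (dot xhat (dot xhat X Y) Z)) := by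
  simpa only [Fml.subst, subst_dot hx, Xv, Yv, Zv, Uv, substXYZU] using
    Fml.Deriv.subst_of_mem (σ := substXYZU X Y Z X) <| hR <| Set.mem_insert _ _

theorem deriv_R₂ (hx : xhat.fvars ⊆ {0}) (hR : Raxioms xhat ⊆ P) (X Y Z : Fml) :
    Fml.Deriv P (.imp (dot xhat (dot xhat X Y) Z) (dot xhat X (dot xhat Y Z))) := by
  simpa only [Fml.subst, subst_dot hx, Xv, Yv, Zv, Uv, substXYZU] using
    Fml.Deriv.subst_of_mem (σ := substXYZU X Y Z X) <| hR <|
      Set.mem_insert_of_mem _ (Set.mem_insert _ _)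

theorem deriv_R₃ (hx : xhat.fvars ⊆ {0}) (hR : Raxioms xhat ⊆ P) (X Y Z U : Fml) :
    Fml.Deriv P (.imp (dot xhat (dot xhat X (dot xhat Y Z)) U)
      (dot xhat (dot xhat (dot xhat X Y) Z) U)) := by
  simpa only [Fml.subst, subst_dot hx, Xv, Yv, Zv, Uv, substXYZU] using
    Fml.Deriv.subst_of_mem (σ := substXYZU X Y Z U) <| hR <|
      Set.mem_insert_of_mem _ <| Set.mem_insert_of_mem _ (Set.mem_insert _ _)

theorem deriv_R₄ (hx : xhat.fvars ⊆ {0}) (hR : Raxioms xhat ⊆ P) (X Y Z U : Fml) :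
    Fml.Deriv P (.imp (dot xhat (dot xhat (dot xhat X Y) Z) U)
      (dot xhat (dot xhat X (dot xhat Y Z)) U)) := by
  simpa only [Fml.subst, subst_dot hx, Xv, Yv, Zv, Uv, substXYZU] using
    Fml.Deriv.subst_of_mem (σ := substXYZU X Y Z U) <| hR <|
      Set.mem_insert_of_mem _ <| Set.mem_insert_of_mem _ <| Set.mem_insert_of_mem _ rfl

end RInstances

namespace ATree

variable {m : ℕ}

theorem word_ne_nil (t : ATree m) : t.word ≠ [] := by
  induction t with
  | leaf a => exact List.cons_ne_nil a []
  | node l r ihl _ => exact List.append_ne_nil_of_left_ne_nil ihl _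

def leftComb (t : ATree m) (w : List (Fin m)) : ATree m :=
  w.foldl (fun s a => .node s (.leaf a)) t

theorem word_leftComb (t : ATree m) (w : List (Fin m)) : (t.leftComb w).word = t.word ++ w := by
  induction w generalizing t with
  | nil => simp [leftComb]
  | cons a w ih => exact (ih (node t (leaf a))).trans (List.append_assoc _ _ _)

theorem leftComb_append (t : ATree m) (w₁ w₂ : List (Fin m)) :
    (t.leftComb w₁).leftComb w₂ = t.leftComb (w₁ ++ w₂) := by
  simp [leftComb, List.foldl_append]

theorem exists_word_eq {w : List (Fin m)} (hw : w ≠ []) : ∃ t : ATree m, t.word = w := by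
  obtain ⟨a, w, rfl⟩ := List.exists_cons_of_ne_nil hw
  exact ⟨(leaf a).leftComb w, word_leftComb _ _⟩

-- Only left factors are rewritten: these are the contexts reached by R₃ and R₄.
inductive Reassoc : ATree m → ATree m → Prop
  | assoc (x y z : ATree m) : Reassoc (.node x (.node y z)) (.node (.node x y) z)
  | assoc_symm (x y z : ATree m) : Reassoc (.node (.node x y) z) (.node x (.node y z))
  | left {l l' : ATree m} (r : ATree m) : Reassoc l l' → Reassoc (.node l r) (.node l' r)

theorem Reassoc.symm {s t : ATree m} (h : Reassoc s t) : Reassoc t s := by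
  induction h with
  | assoc x y z => exact .assoc_symm x y z
  | assoc_symm x y z => exact .assoc x y z
  | left r _ ih => exact .left r ih

open Relation

theorem reassocs_symm {s t : ATree m} (h : ReflTransGen Reassoc s t) :
    ReflTransGen Reassoc t s := by
  induction h with
  | refl => exact .refl
  | tail _ hst ih => exact .head hst.symm ih

theorem reassocs_node_left {l l' : ATree m} (h : ReflTransGen Reassoc l l') (r : ATree m) :
    ReflTransGen Reassoc (node l r) (node l' r) :=
  ReflTransGen.lift (fun s => node s r) (fun _ _ => .left r) _ _ h

theorem reassocs_leftComb {s t : ATree m} (h : ReflTransGen Reassoc s t) (w : List (Fin m)) :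
    ReflTransGen Reassoc (s.leftComb w) (t.leftComb w) := by
  induction w generalizing s t with
  | nil => exact h
  | cons a w ih => exact ih (reassocs_node_left h (leaf a))

theorem reassocs_node_leftComb (l r : ATree m) :
    ReflTransGen Reassoc (node l r) (l.leftComb r.word) := by
  induction r generalizing l with
  | leaf a => exact .refl
  | node r₁ r₂ ih₁ ih₂ =>
    rw [word, ← leftComb_append]
    exact .head (.assoc ..) ((ih₂ _).trans (reassocs_leftComb (ih₁ l) _))

theorem reassocs_leftComb_of_word_eq_cons {t : ATree m} {a : Fin m} {w : List (Fin m)}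
    (h : t.word = a :: w) : ReflTransGen Reassoc t ((leaf a).leftComb w) := by
  induction t generalizing w with
  | leaf b =>
    obtain ⟨rfl, rfl⟩ := List.cons_eq_cons.mp h
    exact .refl
  | node l r ihl _ =>
    obtain ⟨hl, -⟩ | ⟨w₁, hl, rfl⟩ := List.append_eq_cons_iff.mp h
    · exact absurd hl l.word_ne_nil
    rw [← leftComb_append]
    exact (reassocs_node_leftComb l r).trans (reassocs_leftComb (ihl hl) _)

theorem reassocs_of_word_eq {t₁ t₂ : ATree m} (h : t₁.word = t₂.word) :
    ReflTransGen Reassoc t₁ t₂ := by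
  obtain ⟨a, w, hw⟩ := List.exists_cons_of_ne_nil t₁.word_ne_nil
  exact (reassocs_leftComb_of_word_eq_cons hw).trans
    (reassocs_symm (reassocs_leftComb_of_word_eq_cons (h ▸ hw)))

end ATree

section Rebracketing

open Relation

variable {xhat : Fml} {P : Set Fml} {m : ℕ}

-- For a step inside `l` in `(l · r') · r`: R₂ gives `l · (r' · r)`, the step is made there by
-- induction, and R₁ restores the bracketing.
theorem dchain_node_of_reassoc (hx : xhat.fvars ⊆ {0}) (hR : Raxioms xhat ⊆ P)
    {s t : ATree m} (h : s.Reassoc t) (r : ATree m) :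
    DChain P ((ATree.node s r).toFml xhat) ((ATree.node t r).toFml xhat) := by
  induction h generalizing r with
  | assoc x y z => exact .single (deriv_R₃ hx hR ..)
  | assoc_symm x y z => exact .single (deriv_R₄ hx hR ..)
  | left r' _ ih =>
    exact .head (deriv_R₂ hx hR ..) ((ih (.node r' r)).tail (deriv_R₁ hx hR ..))

theorem dchain_of_reassocs (hx : xhat.fvars ⊆ {0}) (hR : Raxioms xhat ⊆ P)
    {s t : ATree m} (h : ReflTransGen ATree.Reassoc s t) :
    DChain P (s.toFml xhat) (t.toFml xhat) := by
  refine ReflTransGen.lift' (ATree.toFml xhat) (fun s t hst => ?_) _ _ h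
  cases hst with
  | assoc x y z => exact .single (deriv_R₁ hx hR ..)
  | assoc_symm x y z => exact .single (deriv_R₂ hx hR ..)
  | left r h => exact dchain_node_of_reassoc hx hR h r

theorem dchain_of_word_eq (hx : xhat.fvars ⊆ {0}) (hR : Raxioms xhat ⊆ P)
    {s t : ATree m} (h : s.word = t.word) : DChain P (s.toFml xhat) (t.toFml xhat) :=
  dchain_of_reassocs hx hR (ATree.reassocs_of_word_eq h)

end Rebracketing

section TagAxioms

variable {xhat : Fml} {m : ℕ} {T : TagSystem m} {i : Fin m} {α : List (Fin m)} {A B : Fml}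

theorem deriv_T₂ (hα : α.length = T.d - 1) (hA : A ∈ codeSet xhat (i :: α))
    (hB : B ∈ codeSet xhat (T.W i)) : Fml.Deriv (PT xhat T) (.imp A B) :=
  .ax (.inl ⟨i, α, A, B, hα, hA, hB, .inr rfl⟩)

theorem deriv_T₁_subst (hx : xhat.fvars ⊆ {0}) (hα : α.length = T.d - 1)
    (hA : A ∈ codeSet xhat (i :: α)) (hB : B ∈ codeSet xhat (T.W i)) (C : Fml) :
    Fml.Deriv (PT xhat T) (.imp (dot xhat A C) (dot xhat C B)) := by
  have hσ : Function.update Fml.var 1 C 0 = .var 0 := rfl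
  simpa only [Fml.subst, subst_dot hx, Xv, Function.update_self, subst_of_mem_codeSet hx hσ hA,
    subst_of_mem_codeSet hx hσ hB] using
    Fml.Deriv.subst_of_mem (P := PT xhat T) (.inl ⟨i, α, A, B, hα, hA, hB, .inl rfl⟩)
      (Function.update Fml.var 1 C)

end TagAxioms

/-- If the tag system `T` produces `ζ` from `ξ` in one step
(`ξ ↦_T ζ`), then for all `A ∈ ͞ξ` and `B ∈ ͞ζ` one has `P_T ⊢ A ⇒ B`. -/
theorem PT_chain_of_step (xhat : Fml) (hx : xhat.fvars = {0})
    (m : ℕ) (T : TagSystem m) (hW : ∀ i, T.W i ≠ [])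
    (ξ ζ : List (Fin m)) (hstep : TagStep T ξ ζ)
    (A B : Fml) (hA : A ∈ codeSet xhat ξ) (hB : B ∈ codeSet xhat ζ) :
    DChain (PT xhat T) A B := by
  obtain ⟨i, β, γ, hβ, rfl, rfl⟩ := hstep
  obtain ⟨tA, hwA, rfl⟩ := hA
  obtain ⟨tB, hwB, rfl⟩ := hB
  obtain ⟨tW, hwW⟩ := ATree.exists_word_eq (hW i)
  have hx' : xhat.fvars ⊆ {0} := hx.subset
  have hR : Raxioms xhat ⊆ PT xhat T := Set.subset_union_right
  rcases eq_or_ne γ [] with rfl | hγ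
  · refine .head (deriv_T₂ hβ ⟨tA, by simpa using hwA, rfl⟩ ⟨tW, hwW, rfl⟩) ?_
    exact dchain_of_word_eq hx' hR (by simpa [hwW] using hwB.symm)
  obtain ⟨tH, hwH⟩ := ATree.exists_word_eq (List.cons_ne_nil i β)
  obtain ⟨tG, hwG⟩ := ATree.exists_word_eq hγ
  have hA' : DChain (PT xhat T) (tA.toFml xhat) ((ATree.node tH tG).toFml xhat) :=
    dchain_of_word_eq hx' hR (by simp [ATree.word, hwA, hwH, hwG])
  have hB' : DChain (PT xhat T) ((ATree.node tG tW).toFml xhat) (tB.toFml xhat) :=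
    dchain_of_word_eq hx' hR (by simp [ATree.word, hwB, hwG, hwW])
  exact hA'.trans (.head (deriv_T₁_subst hx' hβ ⟨tH, hwH, rfl⟩ ⟨tW, hwW, rfl⟩ _) hB')

end PC
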